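/- For all integers m and n with either (2 ≤ m and 2 ≤ n) or (m = 1 and n ≥ 4), the m × n grid graph (the Cartesian product of the path P_m with the path P_n) is killer-win for the cop and killer game. -/

import Mathlib

namespace CopKiller

variable {V : Type*}

/-- A cop strategy: an initial vertex, and a move function that, given the history of
states `(cop position, killer position)` so far (most recent first), produces the cop's
next vertex. -/
structure CopStrategy (V : Type*) where
  init : V
  move : List (V × V) → V

/-- A killer strategy: an initial vertex chosen knowing the cop's initial vertex, and a
move function that, given the history of states so far (most recent first) and the cop's
just-chosen new position, produces the killer's next vertex. -/
structure KillerStrategy (V : Type*) where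
  init : V → V
  move : List (V × V) → V → V

/-- The history of states after `n` full rounds, most recent first. -/
def hist (cs : CopStrategy V) (ks : KillerStrategy V) : ℕ → List (V × V)
  | 0 => [(cs.init, ks.init cs.init)]
  | n + 1 =>
      let h := hist cs ks n
      let c := cs.move h
      (c, ks.move h c) :: h

/-- The cop's position after the cop's `n`-th move (`n = 0` is the initial position). -/
def copPos (cs : CopStrategy V) (ks : KillerStrategy V) : ℕ → V
  | 0 => cs.init
  | n + 1 => cs.move (hist cs ks n)

/-- The killer's position after the killer's `n`-th move (`n = 0` is the initial position). -/
def killerPos (cs : CopStrategy V) (ks : KillerStrategy V) : ℕ → V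
  | 0 => ks.init cs.init
  | n + 1 =>
      let h := hist cs ks n
      ks.move h (cs.move h)

/-- A cop strategy is legal on `G` when every move goes to a vertex adjacent to the cop's
current vertex. -/
def CopLegal (G : SimpleGraph V) (cs : CopStrategy V) : Prop :=
  ∀ (h : List (V × V)) (s : V × V), h.head? = some s → G.Adj s.1 (cs.move h)

/-- A killer strategy is legal on `G` when every move goes to a vertex adjacent to the
killer's current vertex. -/
def KillerLegal (G : SimpleGraph V) (ks : KillerStrategy V) : Prop :=
  ∀ (h : List (V × V)) (s : V × V), h.head? = some s → ∀ c : V, G.Adj s.2 (ks.move h c)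

/-- The cop wins the play: on some cop move the cop lands on the killer's current vertex,
the killer not having captured the cop on any earlier killer move. -/
def CopWinsPlay (cs : CopStrategy V) (ks : KillerStrategy V) : Prop :=
  ∃ n : ℕ, copPos cs ks (n + 1) = killerPos cs ks n ∧
    ∀ m : ℕ, 1 ≤ m → m ≤ n → killerPos cs ks m ≠ copPos cs ks m

/-- The killer wins the play: on some killer move the killer lands on the cop's current
vertex, the cop not having captured the killer on any earlier or simultaneous cop move. -/
def KillerWinsPlay (cs : CopStrategy V) (ks : KillerStrategy V) : Prop :=
  ∃ n : ℕ, 1 ≤ n ∧ killerPos cs ks n = copPos cs ks n ∧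
    ∀ m : ℕ, 1 ≤ m → m ≤ n → copPos cs ks m ≠ killerPos cs ks (m - 1)

/-- `G` is cop-win: the cop has a legal strategy winning against every legal killer strategy. -/
def CopWin (G : SimpleGraph V) : Prop :=
  ∃ cs : CopStrategy V, CopLegal G cs ∧
    ∀ ks : KillerStrategy V, KillerLegal G ks → CopWinsPlay cs ks

/-- `G` is killer-win: the killer has a legal strategy winning against every legal cop strategy. -/
def KillerWin (G : SimpleGraph V) : Prop :=
  ∃ ks : KillerStrategy V, KillerLegal G ks ∧
    ∀ cs : CopStrategy V, CopLegal G cs → KillerWinsPlay cs ks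

/-- `G` is a stalemate: neither player has a winning strategy. -/
def Stalemate (G : SimpleGraph V) : Prop :=
  ¬ CopWin G ∧ ¬ KillerWin G

/-- `G` has a universal vertex: a vertex adjacent to every other vertex. -/
def HasUniversalVertex (G : SimpleGraph V) : Prop :=
  ∃ v : V, ∀ w : V, w ≠ v → G.Adj v w

/-- `G` is a star: there is a vertex `v` such that the edges of `G` are exactly the pairs
containing `v`. -/
def IsStar (G : SimpleGraph V) : Prop :=
  ∃ v : V, ∀ a b : V, G.Adj a b ↔ (a = v ∨ b = v) ∧ a ≠ b

end CopKiller

namespace CopKiller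

/-- The tensor (categorical) product of two simple graphs:
`(g,h) ∼ (g',h')` iff `g ∼ g'` and `h ∼ h'`. -/
def tensorProd {α β : Type*} (G : SimpleGraph α) (H : SimpleGraph β) :
    SimpleGraph (α × β) where
  Adj x y := G.Adj x.1 y.1 ∧ H.Adj x.2 y.2
  symm := by
    constructor
    rintro x y ⟨h1, h2⟩
    exact ⟨h1.symm, h2.symm⟩
  loopless := by
    constructor
    rintro x ⟨h1, _⟩
    exact G.loopless.irrefl x.1 h1

/-- The strong product of two simple graphs: distinct `(g,h)` and `(g',h')` are adjacent
iff (`g = g'` or `g ∼ g'`) and (`h = h'` or `h ∼ h'`). -/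
def strongProd {α β : Type*} (G : SimpleGraph α) (H : SimpleGraph β) :
    SimpleGraph (α × β) where
  Adj x y := x ≠ y ∧ (x.1 = y.1 ∨ G.Adj x.1 y.1) ∧ (x.2 = y.2 ∨ H.Adj x.2 y.2)
  symm := by
    constructor
    rintro x y ⟨hne, h1, h2⟩
    exact ⟨hne.symm, h1.imp (fun e => e.symm) (fun a => a.symm),
      h2.imp (fun e => e.symm) (fun a => a.symm)⟩
  loopless := by
    constructor
    rintro x ⟨hne, -, -⟩
    exact hne rfl

open scoped Classical in
/-- The probability that the Erdős–Rényi random graph `G(n,p)` (each of the `n.choose 2`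
possible edges present independently with probability `p`) satisfies the property `A`. -/
noncomputable def erProb (n : ℕ) (p : ℝ) (A : SimpleGraph (Fin n) → Prop) : ℝ :=
  ∑ G : SimpleGraph (Fin n),
    if A G then p ^ G.edgeSet.ncard * (1 - p) ^ (n.choose 2 - G.edgeSet.ncard) else 0

/-- The number of cycles of length `n` in `G`, i.e. the number of subgraphs of `G`
isomorphic to the cycle graph `C_n`. -/
noncomputable def numCycles {V : Type*} (G : SimpleGraph V) (n : ℕ) : ℕ :=
  {H : G.Subgraph | Nonempty (H.coe ≃g SimpleGraph.cycleGraph n)}.ncard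

end CopKiller

/-! The killer shadows the cop. On a grid with at least two rows and two columns it starts
diagonally next to the cop; on a single row of at least four vertices it starts two steps away.
Whenever the cop steps next to the killer, the killer captures it; otherwise the cop has stepped
away from the killer, who copies the step and restores the same relative position. The cop is
never adjacent to the killer, so it can never capture, and each retreat brings it one step
closer to the wall behind it, so capture comes after finitely many rounds. -/

namespace CopKiller

variable {V : Type*}

/-- The memoryless killer who, standing at `k`, answers the cop's move from `c` to `c'` with
`reply c k c'`. -/
def KillerStrategy.ofReply (init : V → V) (reply : V → V → V → V) : KillerStrategy V where
  init := init
  move h c' := h.head?.elim c' fun s => reply s.1 s.2 c'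

theorem hist_head? (cs : CopStrategy V) (ks : KillerStrategy V) (j : ℕ) :
    (hist cs ks j).head? = some (copPos cs ks j, killerPos cs ks j) := by
  cases j <;> rfl

theorem killerPos_ofReply_succ (cs : CopStrategy V) (init : V → V) (reply : V → V → V → V)
    (j : ℕ) :
    killerPos cs (.ofReply init reply) (j + 1) =
      reply (copPos cs (.ofReply init reply) j) (killerPos cs (.ofReply init reply) j)
        (copPos cs (.ofReply init reply) (j + 1)) := by
  change (hist cs _ j).head?.elim _ _ = _
  rw [hist_head?]
  rfl

theorem killerLegal_ofReply {G : SimpleGraph V} {init : V → V} {reply : V → V → V → V}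
    (hreply : ∀ c k c', G.Adj k (reply c k c')) : KillerLegal G (.ofReply init reply) := by
  intro h s hs c'
  change G.Adj s.2 (h.head?.elim c' fun s => reply s.1 s.2 c')
  rw [hs]
  exact hreply _ _ _

theorem CopLegal.adj_copPos_succ {G : SimpleGraph V} {cs : CopStrategy V} (hcs : CopLegal G cs)
    (ks : KillerStrategy V) (j : ℕ) : G.Adj (copPos cs ks j) (copPos cs ks (j + 1)) :=
  hcs _ _ (hist_head? cs ks j)

theorem killerWinsPlay_ofReply {G : SimpleGraph V} (R : V → V → Prop) (φ : V → V → ℕ)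
    {init : V → V} {reply : V → V → V → V}
    (hsafe : ∀ c k, R c k → ¬ G.Adj c k)
    (hcatch : ∀ c k c', G.Adj k c' → reply c k c' = c')
    (hfollow : ∀ c k c', R c k → G.Adj c c' → ¬ G.Adj k c' →
      R c' (reply c k c') ∧ φ c' (reply c k c') < φ c k)
    {cs : CopStrategy V} (hcs : CopLegal G cs) (hinit : R cs.init (init cs.init)) :
    KillerWinsPlay cs (.ofReply init reply) := by
  set c := copPos cs (.ofReply init reply)
  set k := killerPos cs (.ofReply init reply)
  have hk : ∀ j, k (j + 1) = reply (c j) (k j) (c (j + 1)) :=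
    killerPos_ofReply_succ cs init reply
  suffices ∀ N j, φ (c j) (k j) < N → R (c j) (k j) →
      (∀ t, 1 ≤ t → t ≤ j → c t ≠ k (t - 1)) → KillerWinsPlay cs (.ofReply init reply) from
    this _ 0 (Nat.lt_succ_self _) hinit (fun t ht1 ht0 => absurd ht1 (by omega))
  intro N
  induction N with
  | zero => exact fun _ hφ => absurd hφ (Nat.not_lt_zero _)
  | succ N ih =>
    intro j hφ hR hprefix
    have hmove := hcs.adj_copPos_succ (.ofReply init reply) j
    have hprefix' : ∀ t, 1 ≤ t → t ≤ j + 1 → c t ≠ k (t - 1) := by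
      intro t ht1 ht
      rcases Nat.lt_or_eq_of_le ht with ht | rfl
      · exact hprefix t ht1 (by omega)
      · exact fun heq => hsafe _ _ hR (heq ▸ hmove)
    by_cases hcap : G.Adj (k j) (c (j + 1))
    · exact ⟨j + 1, by omega, (hk j).trans (hcatch _ _ _ hcap), hprefix'⟩
    · obtain ⟨hR', hφ'⟩ := hfollow _ _ _ hR hmove hcap
      rw [← hk] at hR' hφ'
      exact ih (j + 1) (hφ'.trans_le (Nat.lt_succ_iff.mp hφ)) hR' hprefix'

theorem killerWin_of_shadow {G : SimpleGraph V} (R : V → V → Prop) (φ : V → V → ℕ)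
    (hne : ∀ v, ∃ w, G.Adj v w) (hinit : ∀ c, ∃ k, R c k)
    (hsafe : ∀ c k, R c k → ¬ G.Adj c k)
    (hfollow : ∀ c k c', R c k → G.Adj c c' → ¬ G.Adj k c' →
      ∃ k', G.Adj k k' ∧ R c' k' ∧ φ c' k' < φ c k) :
    KillerWin G := by
  choose init hinit using hinit
  have hreply : ∀ c k c', ∃ k', G.Adj k k' ∧ (G.Adj k c' → k' = c') ∧
      (R c k → G.Adj c c' → ¬ G.Adj k c' → R c' k' ∧ φ c' k' < φ c k) := by
    intro c k c'
    by_cases hcap : G.Adj k c'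
    · exact ⟨c', hcap, fun _ => rfl, fun _ _ h => absurd hcap h⟩
    by_cases hR : R c k ∧ G.Adj c c'
    · obtain ⟨k', hk', hR', hφ⟩ := hfollow c k c' hR.1 hR.2 hcap
      exact ⟨k', hk', fun h => absurd h hcap, fun _ _ _ => ⟨hR', hφ⟩⟩
    · obtain ⟨w, hw⟩ := hne k
      exact ⟨w, hw, fun h => absurd h hcap, fun h h' _ => absurd ⟨h, h'⟩ hR⟩
  choose reply hadj hcatch hfollow' using hreply
  exact ⟨.ofReply init reply, killerLegal_ofReply hadj,
    fun cs hcs => killerWinsPlay_ofReply R φ hsafe hcatch hfollow' hcs (hinit _)⟩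

section BoxProd

open SimpleGraph

variable {α β : Type*} {G : SimpleGraph α} {H : SimpleGraph β}

/-- The killer stays diagonally next to the cop, so the cop can only flee along non-backtracking
walks in `G` and `H`, which the ranks `ρG`, `ρH` force to terminate. -/
theorem killerWin_boxProd (ρG : α → α → ℕ) (ρH : β → β → ℕ)
    (hG : ∀ a, ∃ a', G.Adj a a') (hH : ∀ b, ∃ b', H.Adj b b')
    (hρG : ∀ a a₁ a', G.Adj a a₁ → G.Adj a a' → a' ≠ a₁ → ρG a' a < ρG a a₁)
    (hρH : ∀ b b₁ b', H.Adj b b₁ → H.Adj b b' → b' ≠ b₁ → ρH b' b < ρH b b₁) :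
    KillerWin (G □ H) := by
  refine killerWin_of_shadow (fun c k => G.Adj c.1 k.1 ∧ H.Adj c.2 k.2)
    (fun c k => ρG c.1 k.1 + ρH c.2 k.2) ?_ ?_ ?_ ?_
  · rintro ⟨a, b⟩
    obtain ⟨a', ha'⟩ := hG a
    exact ⟨(a', b), boxProd_adj_left.mpr ha'⟩
  · rintro ⟨a, b⟩
    obtain ⟨a', ha'⟩ := hG a
    obtain ⟨b', hb'⟩ := hH b
    exact ⟨(a', b'), ha', hb'⟩
  · rintro c k ⟨ha, hb⟩ (⟨-, heq⟩ | ⟨-, heq⟩)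
    exacts [hb.ne heq, ha.ne heq]
  · rintro ⟨a, b⟩ ⟨a₁, b₁⟩ ⟨a', b'⟩ ⟨ha, hb⟩ (⟨ha', rfl⟩ | ⟨hb', rfl⟩) hcap
    · -- the cop left `a` for `a'`; the killer steps into the vacated column `a`
      have hne : a' ≠ a₁ := by
        rintro rfl
        exact hcap (boxProd_adj_right.mpr hb.symm)
      exact ⟨(a, b₁), boxProd_adj_left.mpr ha.symm, ⟨ha'.symm, hb⟩,
        Nat.add_lt_add_right (hρG a a₁ a' ha ha' hne) _⟩
    · have hne : b' ≠ b₁ := by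
        rintro rfl
        exact hcap (boxProd_adj_left.mpr ha.symm)
      exact ⟨(a₁, b), boxProd_adj_right.mpr hb.symm, ⟨ha, hb'.symm⟩,
        Nat.add_lt_add_left (hρH b b₁ b' hb hb' hne) _⟩

end BoxProd

section PathGraph

open SimpleGraph

variable {n : ℕ}

/-- How far `a` can still walk along the path away from `b`. -/
def pathRoom (n : ℕ) (a b : Fin n) : ℕ := if (a : ℕ) < b then a else n - 1 - a

theorem pathRoom_lt {a b a' : Fin n} (hb : (pathGraph n).Adj a b) (ha' : (pathGraph n).Adj a a')
    (hne : a' ≠ b) : pathRoom n a' a < pathRoom n a b := by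
  rw [pathGraph_adj] at hb ha'
  rw [Ne, Fin.ext_iff] at hne
  have := a'.isLt
  unfold pathRoom
  split_ifs <;> omega

theorem pathGraph_exists_adj (hn : 2 ≤ n) (a : Fin n) : ∃ b, (pathGraph n).Adj a b := by
  by_cases ha : (a : ℕ) + 1 < n
  · exact ⟨⟨a + 1, ha⟩, pathGraph_adj.mpr (Or.inl rfl)⟩
  · exact ⟨⟨a - 1, by omega⟩, pathGraph_adj.mpr (Or.inr (by simp only; omega))⟩

theorem killerWin_boxProd_pathGraph {m : ℕ} (hm : 2 ≤ m) (hn : 2 ≤ n) :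
    KillerWin (pathGraph m □ pathGraph n) :=
  killerWin_boxProd (pathRoom m) (pathRoom n) (pathGraph_exists_adj hm) (pathGraph_exists_adj hn)
    (fun _ _ _ => pathRoom_lt) (fun _ _ _ => pathRoom_lt)

theorem pathGraph_one_boxProd_adj {x y : Fin 1 × Fin n} :
    (pathGraph 1 □ pathGraph n).Adj x y ↔ (pathGraph n).Adj x.2 y.2 := by
  simp [boxProd_adj, Subsingleton.elim x.1 y.1]

theorem pathGraph_one_boxProd_exists_dist_two (hn : 4 ≤ n) (c : Fin 1 × Fin n) :
    ∃ k, c ≠ k ∧ ∃ w, (pathGraph 1 □ pathGraph n).Adj c w ∧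
      (pathGraph 1 □ pathGraph n).Adj w k := by
  simp only [pathGraph_one_boxProd_adj, pathGraph_adj, Ne, Prod.ext_iff, Fin.ext_iff]
  by_cases hc : (c.2 : ℕ) + 2 < n
  · exact ⟨(0, ⟨c.2 + 2, hc⟩), by simp, (0, ⟨c.2 + 1, by omega⟩), by simp, by simp⟩
  · exact ⟨(0, ⟨c.2 - 2, by omega⟩), by simp; omega, (0, ⟨c.2 - 1, by omega⟩), by simp; omega,
      by simp; omega⟩

theorem killerWin_pathGraph_one_boxProd (hn : 4 ≤ n) : KillerWin (pathGraph 1 □ pathGraph n) := by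
  refine killerWin_of_shadow (fun c k => c ≠ k ∧
      ∃ w, (pathGraph 1 □ pathGraph n).Adj c w ∧ (pathGraph 1 □ pathGraph n).Adj w k)
    (fun c k => pathRoom n c.2 k.2) (fun v => ?_) (pathGraph_one_boxProd_exists_dist_two hn) ?_ ?_
  · obtain ⟨b, hb⟩ := pathGraph_exists_adj (by omega) v.2
    exact ⟨(v.1, b), pathGraph_one_boxProd_adj.mpr hb⟩
  · rintro c k ⟨hne, w, hcw, hwk⟩ hck
    rw [Ne, Prod.ext_iff, Subsingleton.elim c.1 k.1, Fin.ext_iff] at hne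
    simp only [pathGraph_one_boxProd_adj, pathGraph_adj] at hcw hwk hck
    omega
  · -- the killer steps into the middle vertex, and the cop's vacated vertex becomes the new middle
    rintro c k c' ⟨hne, w, hcw, hwk⟩ hcc' hcap
    refine ⟨w, hwk.symm, ⟨fun h => hcap (h ▸ hwk.symm), c, hcc'.symm, hcw⟩, ?_⟩
    rw [Ne, Prod.ext_iff, Subsingleton.elim c.1 k.1, Fin.ext_iff] at hne
    simp only [pathGraph_one_boxProd_adj, pathGraph_adj] at hcw hwk hcc' hcap
    have := c'.2.isLt
    unfold pathRoom
    split_ifs <;> omega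

end PathGraph

end CopKiller

/-- For all integers `m`, `n` with either (`2 ≤ m` and `2 ≤ n`) or (`m = 1` and
`n ≥ 4`), the `m × n` grid graph `P_m □ P_n` is killer-win. -/
theorem grid_killerWin (m n : ℕ) (h : (2 ≤ m ∧ 2 ≤ n) ∨ (m = 1 ∧ 4 ≤ n)) :
    CopKiller.KillerWin ((SimpleGraph.pathGraph m).boxProd (SimpleGraph.pathGraph n)) := by
  rcases h with ⟨hm, hn⟩ | ⟨rfl, hn⟩
  · exact CopKiller.killerWin_boxProd_pathGraph hm hn
  · exact CopKiller.killerWin_pathGraph_one_boxProd hn
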